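/- arXiv:2402.19389 — 4 statements merged into one kernel-verified Lean document; each statement's English description precedes it below -/
import Mathlib

section
/- If S = ⟨g₁, …, g_{n−k}⟩ is generated by n−k independent, pairwise commuting elements of the n-qubit Pauli group with −I ∉ S, then the simultaneous +1-eigenspace V_S = {|ψ⟩ : g|ψ⟩ = |ψ⟩ for all g ∈ S} of S is a subspace of (ℂ²)^⊗n of dimension 2^k. -/
open Matrix

noncomputable def pauliMat : Fin 4 → Matrix (Fin 2) (Fin 2) ℂ :=
  ![1, !![0, 1; 1, 0], !![0, -Complex.I; Complex.I, 0], !![1, 0; 0, -1]]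

noncomputable def pauliString {n : ℕ} (P : Fin n → Fin 4) :
    Matrix (Fin n → Fin 2) (Fin n → Fin 2) ℂ :=
  fun x y => ∏ i, pauliMat (P i) (x i) (y i)

def PauliGroup (n : ℕ) : Set (Matrix (Fin n → Fin 2) (Fin n → Fin 2) ℂ) :=
  {g | ∃ c : ℂ, c ∈ ({1, -1, Complex.I, -Complex.I} : Set ℂ) ∧
    ∃ P : Fin n → Fin 4, g = c • pauliString P}

/-!
The operator `2^{-(n-k)} ∏ᵢ (1 + gᵢ)` is the projector onto the common `+1`-eigenspace, so the
dimension is its trace. Expanding the product gives `2^{-(n-k)} ∑_F tr g_F`, where `g_F` is the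
product of the generators indexed by `F`. For `F ≠ ∅`, `g_F` is a Pauli element squaring to `1`
and different from `±1`, hence traceless; only the term `tr 1 = 2^n` survives.
-/

open Function

section CommutingFamily

variable {ι R : Type*}

theorem noncommProd_mul_self_eq_one {M : Type*} [Monoid M] {f : ι → M}
    (hc : Pairwise (Commute on f)) (hsq : ∀ i, f i * f i = 1) (s : Finset ι) :
    s.noncommProd f (hc.set_pairwise _) * s.noncommProd f (hc.set_pairwise _) = 1 := by
  rw [← Finset.noncommProd_mul_distrib f f _ _ fun a _ b _ hab => hc hab]
  exact (Finset.noncommProd_eq_pow_card _ _ _ 1 fun i _ => hsq i).trans (one_pow _)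

variable [Ring R] {f : ι → R}

theorem Pairwise.commute_one_add (hc : Pairwise (Commute on f)) :
    Pairwise (Commute on fun i => 1 + f i) := fun _ _ hab =>
  (Commute.one_left _).add_left ((Commute.one_right _).add_right (hc hab))

variable [DecidableEq ι] (hc : Pairwise (Commute on f))
include hc

theorem noncommProd_one_add_eq_sum_powerset (s : Finset ι) :
    s.noncommProd (fun i => 1 + f i) (hc.commute_one_add.set_pairwise _) =
      ∑ F ∈ s.powerset, F.noncommProd f (hc.set_pairwise _) := by
  induction s using Finset.induction_on with
  | empty => simp
  | insert a s ha ih =>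
    rw [Finset.sum_powerset_insert ha, Finset.noncommProd_insert_of_notMem _ _ _ _ ha, ih,
      add_mul, one_mul, Finset.mul_sum]
    congr 1
    refine Finset.sum_congr rfl fun F hF => ?_
    rw [Finset.noncommProd_insert_of_notMem _ _ _ _ fun haF => ha (Finset.mem_powerset.1 hF haF)]

theorem mul_noncommProd_one_add_of_mem (hsq : ∀ i, f i * f i = 1) {s : Finset ι} {j : ι}
    (hj : j ∈ s) :
    f j * s.noncommProd (fun i => 1 + f i) (hc.commute_one_add.set_pairwise _) =
      s.noncommProd (fun i => 1 + f i) (hc.commute_one_add.set_pairwise _) := by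
  rw [← s.mul_noncommProd_erase hj, ← mul_assoc, mul_add, mul_one, hsq, add_comm]

end CommutingFamily

section Matrix

variable {K m ι : Type*} [Field K] [Fintype m] [DecidableEq m]

theorem noncommProd_mulVec_of_forall_mulVec {A : ι → Matrix m m K}
    (hc : Pairwise (Commute on A)) (s : Finset ι) {x : m → K}
    (hx : ∀ i ∈ s, A i *ᵥ x = x) :
    s.noncommProd A (hc.set_pairwise _) *ᵥ x = x := by
  let fixing : Submonoid (Matrix m m K) :=
    (MulAction.stabilizerSubmonoid (Module.End K (m → K)) x).comap
      Matrix.toLinAlgEquiv'.toRingEquiv.toMonoidHom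
  have hmem : ∀ B, B ∈ fixing ↔ B *ᵥ x = x := fun B => by simp [fixing]
  exact (hmem _).1 (fixing.noncommProd_mem _ _ _ fun i hi => (hmem _).2 (hx i hi))

theorem mem_iInf_eigenspace_one_iff {A : ι → Matrix m m K} {x : m → K} :
    x ∈ ⨅ i, Module.End.eigenspace (toLin' (A i)) 1 ↔ ∀ i, A i *ᵥ x = x := by
  simp [Submodule.mem_iInf]

variable [Fintype ι] [DecidableEq ι] [NeZero (2 : K)] {A : ι → Matrix m m K}

theorem isProj_iInf_eigenspace_one (hc : Pairwise (Commute on A)) (hsq : ∀ i, A i * A i = 1) :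
    LinearMap.IsProj (⨅ i, Module.End.eigenspace (toLin' (A i)) 1)
      (toLin' ((2 ^ Fintype.card ι : K)⁻¹ •
        Finset.univ.noncommProd (fun i => 1 + A i) (hc.commute_one_add.set_pairwise _))) where
  map_mem x := by
    rw [mem_iInf_eigenspace_one_iff]
    intro i
    rw [toLin'_apply, mulVec_mulVec, Matrix.mul_smul,
      mul_noncommProd_one_add_of_mem hc hsq (Finset.mem_univ i)]
  map_id x hx := by
    rw [mem_iInf_eigenspace_one_iff] at hx
    rw [toLin'_apply, smul_mulVec, noncommProd_one_add_eq_sum_powerset hc, sum_mulVec]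
    simp only [noncommProd_mulVec_of_forall_mulVec hc _ fun i _ => hx i]
    rw [Finset.sum_const, Finset.card_powerset, Finset.card_univ, ← Nat.cast_smul_eq_nsmul K,
      smul_smul, Nat.cast_pow, Nat.cast_two, inv_mul_cancel₀ (pow_ne_zero _ two_ne_zero),
      one_smul]

theorem finrank_iInf_eigenspace_one (hc : Pairwise (Commute on A))
    (hsq : ∀ i, A i * A i = 1) :
    (Module.finrank K ↥(⨅ i, Module.End.eigenspace (toLin' (A i)) 1) : K) =
      (2 ^ Fintype.card ι : K)⁻¹ * ∑ F : Finset ι, (F.noncommProd A (hc.set_pairwise _)).trace := by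
  rw [← (isProj_iInf_eigenspace_one hc hsq).trace, trace_toLin'_eq, trace_smul,
    noncommProd_one_add_eq_sum_powerset hc, trace_sum, Finset.powerset_univ, smul_eq_mul]

end Matrix

noncomputable def pauliPhase : Fin 4 → Fin 4 → ℂ :=
  ![![1, 1, 1, 1], ![1, 1, Complex.I, -Complex.I], ![1, -Complex.I, 1, Complex.I],
    ![1, Complex.I, -Complex.I, 1]]

-- With the labelling `0, 1, 2, 3 = I, X, Y, Z`, the label of a product is the XOR of the labels.
theorem pauliMat_mul (a b : Fin 4) :
    pauliMat a * pauliMat b = pauliPhase a b • pauliMat (a ^^^ b) := by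
  fin_cases a <;> fin_cases b <;>
    · ext i j
      fin_cases i <;> fin_cases j <;>
        simp [pauliMat, pauliPhase, mul_apply, Fin.sum_univ_two]

theorem pauliPhase_pow_four (a b : Fin 4) : pauliPhase a b ^ 4 = 1 := by
  fin_cases a <;> fin_cases b <;> simp [pauliPhase, Even.neg_pow ⟨2, rfl⟩]

theorem Complex.pow_four_eq_one_iff {c : ℂ} :
    c ^ 4 = 1 ↔ c ∈ ({1, -1, Complex.I, -Complex.I} : Set ℂ) := by
  constructor
  · intro h
    have : (c - 1) * (c + 1) * (c - Complex.I) * (c + Complex.I) = 0 := by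
      linear_combination h + (1 - c ^ 2) * Complex.I_sq
    simp only [mul_eq_zero, sub_eq_zero, add_eq_zero_iff_eq_neg] at this
    tauto
  · rintro (rfl | rfl | rfl | rfl) <;> norm_num [pow_succ]

theorem pauliString_mul {n : ℕ} (P Q : Fin n → Fin 4) :
    pauliString P * pauliString Q =
      (∏ i, pauliPhase (P i) (Q i)) • pauliString (fun i => P i ^^^ Q i) := by
  ext x y
  simp only [mul_apply, pauliString, Matrix.smul_apply, smul_eq_mul, ← Finset.prod_mul_distrib]
  rw [← Fintype.prod_sum fun i t => pauliMat (P i) (x i) t * pauliMat (Q i) t (y i)]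
  simp only [← mul_apply, pauliMat_mul, Matrix.smul_apply, smul_eq_mul]

theorem pauliString_zero {n : ℕ} : pauliString (0 : Fin n → Fin 4) = 1 := by
  ext x y
  simp [pauliString, pauliMat, one_apply, Finset.prod_boole, funext_iff]

def pauliSubmonoid (n : ℕ) : Submonoid (Matrix (Fin n → Fin 2) (Fin n → Fin 2) ℂ) where
  carrier := PauliGroup n
  one_mem' := ⟨1, by simp, 0, by rw [pauliString_zero, one_smul]⟩
  mul_mem' := by
    rintro _ _ ⟨c, hc, P, rfl⟩ ⟨d, hd, Q, rfl⟩
    refine ⟨c * d * ∏ i, pauliPhase (P i) (Q i), ?_, fun i => P i ^^^ Q i, ?_⟩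
    · rw [← Complex.pow_four_eq_one_iff] at hc hd ⊢
      simp [mul_pow, hc, hd, ← Finset.prod_pow, pauliPhase_pow_four]
    · rw [smul_mul_smul, pauliString_mul, smul_smul]

theorem trace_pauliString {n : ℕ} (P : Fin n → Fin 4) :
    (pauliString P).trace = ∏ i, (pauliMat (P i)).trace := by
  simp only [trace, diag, pauliString, Fintype.prod_sum]

theorem trace_pauliMat_of_ne_zero {a : Fin 4} (ha : a ≠ 0) : (pauliMat a).trace = 0 := by
  fin_cases a <;> simp_all [pauliMat, trace, Fin.sum_univ_two]

theorem trace_pauliString_of_ne_zero {n : ℕ} {P : Fin n → Fin 4} (hP : P ≠ 0) :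
    (pauliString P).trace = 0 := by
  obtain ⟨i, hi⟩ := ne_iff.1 hP
  rw [trace_pauliString, Finset.prod_eq_zero (Finset.mem_univ i) (trace_pauliMat_of_ne_zero hi)]

theorem trace_eq_zero_of_mem_pauliGroup {n : ℕ} {A : Matrix (Fin n → Fin 2) (Fin n → Fin 2) ℂ}
    (hA : A ∈ PauliGroup n) (hsq : A * A = 1) (h1 : A ≠ 1) (h2 : A ≠ -1) : A.trace = 0 := by
  obtain ⟨c, -, P, rfl⟩ := hA
  obtain rfl | hP := eq_or_ne P 0
  · rw [pauliString_zero, smul_mul_smul, one_mul] at hsq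
    have hc : c * c = 1 := by simpa using congr_fun (congr_fun hsq 0) 0
    obtain rfl | rfl := mul_self_eq_one_iff.1 hc
    · exact absurd (by rw [pauliString_zero, one_smul]) h1
    · exact absurd (by rw [pauliString_zero, neg_one_smul]) h2
  · rw [trace_smul, trace_pauliString_of_ne_zero hP, smul_zero]

/-- If `S` is generated by `n-k` independent, pairwise commuting elements of the
n-qubit Pauli group with `-I ∉ S`, then the simultaneous `+1`-eigenspace has
dimension `2^k`. -/
theorem stabilizer_codespace_dim (n k : ℕ) (hk : k ≤ n)
    (g : Fin (n - k) → Matrix (Fin n → Fin 2) (Fin n → Fin 2) ℂ)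
    (hP : ∀ i, g i ∈ PauliGroup n)
    (hsq : ∀ i, g i * g i = 1)
    (hcomm : ∀ i j, g i * g j = g j * g i)
    (hindep : ∀ F : Finset (Fin (n - k)),
      F.noncommProd g (fun a _ b _ _ => hcomm a b) = 1 → F = ∅)
    (hnoNegI : ∀ F : Finset (Fin (n - k)),
      F.noncommProd g (fun a _ b _ _ => hcomm a b) ≠ -1) :
    Module.finrank ℂ
      ↥(⨅ i, Module.End.eigenspace (Matrix.toLin' (g i)) 1) = 2 ^ k := by
  have hc : Pairwise (Commute on g) := fun i j _ => hcomm i j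
  have htrace : ∑ F : Finset (Fin (n - k)), (F.noncommProd g (hc.set_pairwise _)).trace =
      2 ^ n := by
    rw [Finset.sum_eq_single ∅ (fun F _ hF => trace_eq_zero_of_mem_pauliGroup
      ((pauliSubmonoid n).noncommProd_mem _ _ _ fun i _ => hP i)
      (noncommProd_mul_self_eq_one hc hsq F) (fun h => hF (hindep F h)) (hnoNegI F))
      (by simp)]
    simp
  have h := finrank_iInf_eigenspace_one hc hsq
  have hsplit : (2 : ℂ) ^ n = 2 ^ (n - k) * 2 ^ k := by rw [← pow_add, Nat.sub_add_cancel hk]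
  rw [htrace, Fintype.card_fin, hsplit, inv_mul_cancel_left₀ (pow_ne_zero _ two_ne_zero)] at h
  exact_mod_cast h
end

section
/- The [[8,1,3]] code has distance at least 3: every weight-1 and weight-2 Pauli operator on 8 qubits either anticommutes with some stabilizer generator or lies in the stabilizer group; in particular no Pauli operator of weight ≤ 2 is a nontrivial logical operator. -/
open Matrix

/-- Stabilizer generators of the `[[8,1,3]]` code, with Pauli labels
`0 = I`, `1 = X`, `2 = Y`, `3 = Z`:
`g₁ = Z₀X₁Z₂Z₄`, `g₂ = Y₀Y₂Z₃Z₄`, `g₃ = Z₀Z₁X₄Z₆`, `g₄ = X₁Z₃X₅X₆`,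
`g₅ = Z₃Z₅Z₆X₇`, `g₆ = Z₀X₃Z₆Z₇`, `g₇ = Z₁X₂X₃Z₄X₆X₇`. -/
def gens : Fin 7 → Fin 8 → Fin 4 :=
  ![![3, 1, 3, 0, 3, 0, 0, 0],
    ![2, 0, 2, 3, 3, 0, 0, 0],
    ![3, 3, 0, 0, 1, 0, 3, 0],
    ![0, 1, 0, 3, 0, 1, 1, 0],
    ![0, 0, 0, 3, 0, 3, 3, 1],
    ![3, 0, 0, 1, 0, 0, 3, 3],
    ![0, 3, 1, 1, 3, 0, 1, 1]]

/-- X-part bit of a Pauli label. -/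
def xbit : Fin 4 → ZMod 2 := ![0, 1, 1, 0]

/-- Z-part bit of a Pauli label. -/
def zbit : Fin 4 → ZMod 2 := ![0, 0, 1, 1]

/-- Binary symplectic representation `(X-part | Z-part)` of a Pauli string. -/
def symp {n : ℕ} (P : Fin n → Fin 4) : (Fin n → ZMod 2) × (Fin n → ZMod 2) :=
  (fun i => xbit (P i), fun i => zbit (P i))

/-- Symplectic inner product over `F₂`. -/
def sympProd {n : ℕ} (v w : (Fin n → ZMod 2) × (Fin n → ZMod 2)) : ZMod 2 :=
  (∑ i, v.1 i * w.2 i) + (∑ i, v.2 i * w.1 i)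

/-- Syndrome of a Pauli error with respect to the `[[8,1,3]]` generators. -/
def synd (e : Fin 8 → Fin 4) : Fin 7 → ZMod 2 :=
  fun j => sympProd (symp e) (symp (gens j))

/-- The single-qubit error with Pauli `p + 1 ∈ {X, Y, Z}` on qubit `q`. -/
def singleErr (q : Fin 8) (p : Fin 3) : Fin 8 → Fin 4 :=
  fun i => if i = q then p.succ else 0


set_option maxRecDepth 4000 in
theorem aux1 : ∀ (q : Fin 8) (p : Fin 4), p ≠ 0 →
    ∃ j, synd (fun i => if i = q then p else 0) j ≠ 0 := by decide

set_option maxRecDepth 4000 in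
theorem aux2 : ∀ (a b : Fin 8) (p r : Fin 4), a ≠ b → p ≠ 0 → r ≠ 0 →
    ∃ j, synd (fun i => if i = a then p else if i = b then r else 0) j ≠ 0 := by decide

/-- The `[[8,1,3]]` code has distance at least 3: every Pauli operator of weight
1 or 2 either anticommutes with some stabilizer generator (nonzero syndrome) or
lies in the stabilizer group (mod phases, i.e. its symplectic vector is in the
`F₂`-span of the generators' symplectic vectors).  In particular no Pauli
operator of weight `≤ 2` is a nontrivial logical operator. -/
theorem code_813_distance_ge_three :
    ∀ e : Fin 8 → Fin 4,
      1 ≤ (Finset.univ.filter fun i => e i ≠ 0).card →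
      (Finset.univ.filter fun i => e i ≠ 0).card ≤ 2 →
      (∃ j, synd e j ≠ 0) ∨
        symp e ∈ Submodule.span (ZMod 2) (Set.range fun i => symp (gens i)) := by
  intro e h1 h2
  left
  set s := Finset.univ.filter fun i => e i ≠ 0 with hs
  have hmem : ∀ i, i ∈ s ↔ e i ≠ 0 := by
    intro i; simp [hs]
  interval_cases h : s.card
  · obtain ⟨q, hq⟩ := Finset.card_eq_one.mp h
    have hq' : ∀ i, e i ≠ 0 ↔ i = q := by
      intro i; rw [← hmem, hq, Finset.mem_singleton]
    have he : e = fun i => if i = q then e q else 0 := by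
      funext i
      by_cases hiq : i = q
      · simp [hiq]
      · simp [hiq]
        by_contra hne
        exact hiq ((hq' i).mp hne)
    rw [he]
    exact aux1 q (e q) ((hq' q).mpr rfl)
  · obtain ⟨a, b, hab, hab2⟩ := Finset.card_eq_two.mp h
    have hq' : ∀ i, e i ≠ 0 ↔ i = a ∨ i = b := by
      intro i; rw [← hmem, hab2, Finset.mem_insert, Finset.mem_singleton]
    have he : e = fun i => if i = a then e a else if i = b then e b else 0 := by
      funext i
      by_cases hia : i = a
      · simp [hia]
      · by_cases hib : i = b
        · simp [hia, hib, Ne.symm hab]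
        · simp [hia, hib, Ne.symm hab]
          by_contra hne
          rcases (hq' i).mp hne with h | h
          exacts [hia h, hib h]
    rw [he]
    exact aux2 a b (e a) (e b) hab ((hq' a).mpr (Or.inl rfl)) ((hq' b).mpr (Or.inr rfl))
end

section
/- For the [[8,1,3]] code with the reordered syndrome-extraction schedule, every propagated error listed in the fault table (e.g., Z₀P₁, P₂Z₄, Y₀P₂, P₃Z₄, Z₀P₁, P₄Z₆, X₁P₃, P₅X₆, Z₅P₃, P₆X₇, Z₇P₃, P₀Z₆, Z₁P₃, Z₁X₃P₄, P₂X₆X₇, P₆X₇ for P ∈ {X,Y,Z}) has a syndrome that is either equal to the syndrome of a single-qubit error E with the propagated error differing from E by a stabilizer element, or is distinct from the syndromes of all single-qubit errors and all other listed propagated errors (again up to stabilizer equivalence). -/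
open Matrix

/-- Base Pauli strings of the propagated errors in the fault table
(`Z₀P₁, P₂Z₄, Y₀P₂, P₃Z₄, Z₀P₁, P₄Z₆, X₁P₃, P₅X₆, Z₅P₃, P₆X₇, Z₇P₃, P₀Z₆,
Z₁P₃, Z₁X₃P₄, P₂X₆X₇, P₆X₇`), with the variable Pauli `P` removed. -/
def faultBase : Fin 16 → Fin 8 → Fin 4 :=
  ![![3, 0, 0, 0, 0, 0, 0, 0],
    ![0, 0, 0, 0, 3, 0, 0, 0],
    ![2, 0, 0, 0, 0, 0, 0, 0],
    ![0, 0, 0, 0, 3, 0, 0, 0],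
    ![3, 0, 0, 0, 0, 0, 0, 0],
    ![0, 0, 0, 0, 0, 0, 3, 0],
    ![0, 1, 0, 0, 0, 0, 0, 0],
    ![0, 0, 0, 0, 0, 0, 1, 0],
    ![0, 0, 0, 0, 0, 3, 0, 0],
    ![0, 0, 0, 0, 0, 0, 0, 1],
    ![0, 0, 0, 0, 0, 0, 0, 3],
    ![0, 0, 0, 0, 0, 0, 3, 0],
    ![0, 3, 0, 0, 0, 0, 0, 0],
    ![0, 3, 0, 1, 0, 0, 0, 0],
    ![0, 0, 0, 0, 0, 0, 1, 1],
    ![0, 0, 0, 0, 0, 0, 0, 1]]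

/-- Qubit on which the variable Pauli `P` of each fault-table entry acts. -/
def faultPos : Fin 16 → Fin 8 :=
  ![1, 2, 2, 3, 1, 4, 3, 5, 3, 6, 3, 0, 3, 4, 2, 6]

/-- The propagated error of fault-table entry `a` with `P` the Pauli `p + 1`. -/
def faultErr (a : Fin 16) (p : Fin 3) : Fin 8 → Fin 4 :=
  fun i => if i = faultPos a then p.succ else faultBase a i

/-- Auxiliary: membership in the span of the generators, phrased as an
explicit (decidable) existential over coefficient vectors. -/
def inSpan (v : (Fin 8 → ZMod 2) × (Fin 8 → ZMod 2)) : Prop :=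
  ∃ c : Fin 7 → ZMod 2, ∑ i, c i • symp (gens i) = v

instance (v) : Decidable (inSpan v) := by unfold inSpan; infer_instance

lemma inSpan_mem {v : (Fin 8 → ZMod 2) × (Fin 8 → ZMod 2)} (h : inSpan v) :
    v ∈ Submodule.span (ZMod 2) (Set.range fun i => symp (gens i)) :=
  (Submodule.mem_span_range_iff_exists_fun (ZMod 2)).2 h

set_option maxHeartbeats 4000000 in
set_option maxRecDepth 100000 in
lemma key : ∀ (a : Fin 16) (p : Fin 3),
      (∃ (q : Fin 8) (r : Fin 3),
          synd (faultErr a p) = synd (singleErr q r) ∧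
          inSpan (symp (faultErr a p) + symp (singleErr q r))) ∨
      ((∀ (q : Fin 8) (r : Fin 3), synd (faultErr a p) ≠ synd (singleErr q r)) ∧
        ∀ (b : Fin 16) (p' : Fin 3), (b, p') ≠ (a, p) →
          synd (faultErr a p) = synd (faultErr b p') →
          inSpan (symp (faultErr a p) + symp (faultErr b p'))) := by decide

/-- Every propagated error in the fault table of the `[[8,1,3]]` code with the
reordered syndrome-extraction schedule either has the syndrome of a
single-qubit error from which it differs by a stabilizer element, or its
syndrome is distinct from those of all single-qubit errors and from those of
all other listed propagated errors, up to stabilizer equivalence. -/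
theorem fault_table_syndromes_distinct :
    ∀ (a : Fin 16) (p : Fin 3),
      (∃ (q : Fin 8) (r : Fin 3),
          synd (faultErr a p) = synd (singleErr q r) ∧
          symp (faultErr a p) + symp (singleErr q r) ∈
            Submodule.span (ZMod 2) (Set.range fun i => symp (gens i))) ∨
      ((∀ (q : Fin 8) (r : Fin 3), synd (faultErr a p) ≠ synd (singleErr q r)) ∧
        ∀ (b : Fin 16) (p' : Fin 3), (b, p') ≠ (a, p) →
          synd (faultErr a p) = synd (faultErr b p') →
          symp (faultErr a p) + symp (faultErr b p') ∈
            Submodule.span (ZMod 2) (Set.range fun i => symp (gens i))) := by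
  intro a p
  rcases key a p with ⟨q, r, h1, h2⟩ | ⟨h1, h2⟩
  · exact Or.inl ⟨q, r, h1, inSpan_mem h2⟩
  · exact Or.inr ⟨h1, fun b p' hne hs => inSpan_mem (h2 b p' hne hs)⟩
end

section
/- Given a check matrix in standard form [[I_r A A' | B 0 C], [0 0 0 | D I_l E]], the rows of the matrix [[0 Eᵀ I_k | Cᵀ 0 0], [0 0 0 | A'ᵀ 0 I_k]] (the logical X̄ and Z̄ operators) have zero symplectic inner product with every row of the check matrix. -/
open Matrix

/-- Symplectic inner product of two `(x|z)` vectors over `F₂`. -/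
def sympIP {ι : Type*} [Fintype ι]
    (v w : (ι → ZMod 2) × (ι → ZMod 2)) : ZMod 2 :=
  (∑ x, v.1 x * w.2 x) + (∑ x, v.2 x * w.1 x)

/-- For a check matrix in standard form
`[[I_r A A' | B 0 C], [0 0 0 | D I_l E]]`, the logical rows
`[[0 Eᵀ I_k | Cᵀ 0 0], [0 0 0 | A'ᵀ 0 I_k]]` have zero symplectic inner product
with every row of the check matrix. -/
theorem logical_rows_commute_with_check_rows (r l k : ℕ)
    (A : Matrix (Fin r) (Fin l) (ZMod 2)) (A' : Matrix (Fin r) (Fin k) (ZMod 2))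
    (B : Matrix (Fin r) (Fin r) (ZMod 2)) (C : Matrix (Fin r) (Fin k) (ZMod 2))
    (D : Matrix (Fin l) (Fin r) (ZMod 2)) (E : Matrix (Fin l) (Fin k) (ZMod 2)) :
    let δr : Fin r → Fin r → ZMod 2 := fun i j => if j = i then 1 else 0
    let δl : Fin l → Fin l → ZMod 2 := fun i j => if j = i then 1 else 0
    let δk : Fin k → Fin k → ZMod 2 := fun i j => if j = i then 1 else 0
    let check1 : Fin r →
        (Fin r ⊕ Fin l ⊕ Fin k → ZMod 2) × (Fin r ⊕ Fin l ⊕ Fin k → ZMod 2) :=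
      fun i => (Sum.elim (δr i) (Sum.elim (A i) (A' i)),
                Sum.elim (B i) (Sum.elim 0 (C i)))
    let check2 : Fin l →
        (Fin r ⊕ Fin l ⊕ Fin k → ZMod 2) × (Fin r ⊕ Fin l ⊕ Fin k → ZMod 2) :=
      fun i => (0, Sum.elim (D i) (Sum.elim (δl i) (E i)))
    let xbar : Fin k →
        (Fin r ⊕ Fin l ⊕ Fin k → ZMod 2) × (Fin r ⊕ Fin l ⊕ Fin k → ZMod 2) :=
      fun j => (Sum.elim 0 (Sum.elim (fun a => E a j) (δk j)),
                Sum.elim (fun a => C a j) (Sum.elim 0 0))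
    let zbar : Fin k →
        (Fin r ⊕ Fin l ⊕ Fin k → ZMod 2) × (Fin r ⊕ Fin l ⊕ Fin k → ZMod 2) :=
      fun j => (0, Sum.elim (fun a => A' a j) (Sum.elim 0 (δk j)))
    (∀ (j : Fin k) (i : Fin r), sympIP (xbar j) (check1 i) = 0) ∧
    (∀ (j : Fin k) (i : Fin l), sympIP (xbar j) (check2 i) = 0) ∧
    (∀ (j : Fin k) (i : Fin r), sympIP (zbar j) (check1 i) = 0) ∧
    (∀ (j : Fin k) (i : Fin l), sympIP (zbar j) (check2 i) = 0) := by
  refine ⟨?_, ?_, ?_, ?_⟩ <;> intro j i <;>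
    simp [sympIP, Fintype.sum_sum_type, Finset.sum_ite_eq, Finset.sum_ite_eq',
      mul_comm, CharTwo.add_self_eq_zero]
end
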